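/- arXiv:1010.0380 — 2 statements merged into one kernel-verified Lean document; each statement's English description precedes it below -/
import Mathlib

section
/- Let Φ : S → T be a unital completely positive surjection between operator systems. If Φ is a complete quotient map of operator spaces (i.e., each Φ_n maps the open unit ball of M_n(S) onto the open unit ball of M_n(T)), then Φ is a complete order quotient map. -/
open scoped TensorProduct Kronecker ComplexOrder Matrix

noncomputable section

/-- Conjugation `α X α*` of an operator-valued matrix by a scalar matrix. -/
def mconj {V : Type} [AddCommGroup V] [Module ℂ V] {m n : Type} [Fintype m]
    (α : Matrix n m ℂ) (X : Matrix m m V) : Matrix n n V :=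
  Matrix.of fun i j => ∑ k, ∑ l, (α i k * star (α j l)) • X k l

/-- Entrywise star (conjugate transpose) of an operator-valued matrix. -/
def mstar {V : Type} [AddCommGroup V] [StarAddMonoid V] {m n : Type}
    (X : Matrix m n V) : Matrix n m V :=
  Matrix.of fun i j => star (X j i)

/-- An abstract operator system: a matrix ordered complex ∗-vector space with an
Archimedean matrix order unit (Choi–Effros). -/
structure OpSys (V : Type) [AddCommGroup V] [Module ℂ V] [StarAddMonoid V]
    [StarModule ℂ V] : Type 1 where
  pos : ∀ (ι : Type) [Fintype ι] [DecidableEq ι], Set (Matrix ι ι V)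
  unit : V
  unit_star : star unit = unit
  pos_star : ∀ (ι : Type) [Fintype ι] [DecidableEq ι] (X : Matrix ι ι V),
    X ∈ pos ι → mstar X = X
  pos_add : ∀ (ι : Type) [Fintype ι] [DecidableEq ι] (X Y : Matrix ι ι V),
    X ∈ pos ι → Y ∈ pos ι → X + Y ∈ pos ι
  pos_conj : ∀ (ι κ : Type) [Fintype ι] [DecidableEq ι] [Fintype κ] [DecidableEq κ]
    (α : Matrix κ ι ℂ) (X : Matrix ι ι V), X ∈ pos ι → mconj α X ∈ pos κ
  unit_pos : ∀ (ι : Type) [Fintype ι] [DecidableEq ι],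
    Matrix.diagonal (fun _ => unit) ∈ pos ι
  archimedean : ∀ (ι : Type) [Fintype ι] [DecidableEq ι] (X : Matrix ι ι V),
    mstar X = X →
    (∀ ε : ℝ, 0 < ε → X + (ε : ℂ) • Matrix.diagonal (fun _ => unit) ∈ pos ι) →
    X ∈ pos ι
  order_unit : ∀ (ι : Type) [Fintype ι] [DecidableEq ι] (X : Matrix ι ι V),
    mstar X = X → ∃ r : ℝ, 0 < r ∧
      (r : ℂ) • Matrix.diagonal (fun _ => unit) - X ∈ pos ι
  proper : ∀ x : V, Matrix.of (fun _ _ : Fin 1 => x) ∈ pos (Fin 1) →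
    Matrix.of (fun _ _ : Fin 1 => -x) ∈ pos (Fin 1) → x = 0

variable {V W : Type}

/-- The matrix norms of an operator system, described as a predicate `‖X‖ ≤ r`,
determined by the order structure via `2×2` block matrices. -/
def OpSys.normLE [AddCommGroup V] [Module ℂ V] [StarAddMonoid V] [StarModule ℂ V]
    (𝒮 : OpSys V) {ι κ : Type} [Fintype ι] [DecidableEq ι] [Fintype κ] [DecidableEq κ]
    (X : Matrix ι κ V) (r : ℝ) : Prop :=
  Matrix.fromBlocks ((r : ℂ) • Matrix.diagonal (fun _ => 𝒮.unit)) X (mstar X)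
    ((r : ℂ) • Matrix.diagonal (fun _ => 𝒮.unit)) ∈ 𝒮.pos (ι ⊕ κ)

/-- The norm of a single element of an operator system. -/
def OpSys.elemNormLE [AddCommGroup V] [Module ℂ V] [StarAddMonoid V] [StarModule ℂ V]
    (𝒮 : OpSys V) (x : V) (r : ℝ) : Prop :=
  𝒮.normLE (Matrix.of fun _ _ : Fin 1 => x) r

/-- Completeness of the norm of an operator system. -/
def OpSys.CompleteNorms [AddCommGroup V] [Module ℂ V] [StarAddMonoid V] [StarModule ℂ V]
    (𝒮 : OpSys V) : Prop :=
  ∀ u : ℕ → V,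
    (∀ ε : ℝ, 0 < ε → ∃ N : ℕ, ∀ p ≥ N, ∀ q ≥ N, 𝒮.elemNormLE (u p - u q) ε) →
    ∃ x : V, ∀ ε : ℝ, 0 < ε → ∃ N : ℕ, ∀ p ≥ N, 𝒮.elemNormLE (u p - x) ε

section Maps

variable [AddCommGroup V] [Module ℂ V] [StarAddMonoid V] [StarModule ℂ V]
variable [AddCommGroup W] [Module ℂ W] [StarAddMonoid W] [StarModule ℂ W]

/-- Completely positive map between operator systems. -/
def IsCPmap (𝒮 : OpSys V) (𝒯 : OpSys W) (Φ : V →ₗ[ℂ] W) : Prop :=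
  ∀ (ι : Type) [Fintype ι] [DecidableEq ι], ∀ X ∈ 𝒮.pos ι, X.map Φ ∈ 𝒯.pos ι

/-- Unital completely positive map between operator systems. -/
def IsUCPmap (𝒮 : OpSys V) (𝒯 : OpSys W) (Φ : V →ₗ[ℂ] W) : Prop :=
  Φ 𝒮.unit = 𝒯.unit ∧ IsCPmap 𝒮 𝒯 Φ

/-- (Unital) complete order embedding between operator systems. -/
def IsCOEmbedding (𝒮 : OpSys V) (𝒯 : OpSys W) (Φ : V →ₗ[ℂ] W) : Prop :=
  Φ 𝒮.unit = 𝒯.unit ∧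
  ∀ (ι : Type) [Fintype ι] [DecidableEq ι], ∀ X : Matrix ι ι V,
    X ∈ 𝒮.pos ι ↔ X.map Φ ∈ 𝒯.pos ι

/-- Complete order quotient map between operator systems: a unital completely positive
surjection such that every positive `Q` admits, for every `ε > 0`, a lift `P` with
`P + ε Iₙ ⊗ 1` positive. -/
def IsCOQuotientMap (𝒮 : OpSys V) (𝒯 : OpSys W) (Φ : V →ₗ[ℂ] W) : Prop :=
  IsUCPmap 𝒮 𝒯 Φ ∧ Function.Surjective Φ ∧
  ∀ (ι : Type) [Fintype ι] [DecidableEq ι], ∀ Q ∈ 𝒯.pos ι, ∀ ε : ℝ, 0 < ε →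
    ∃ P : Matrix ι ι V,
      P + (ε : ℂ) • Matrix.diagonal (fun _ => 𝒮.unit) ∈ 𝒮.pos ι ∧ P.map Φ = Q

end Maps

section Tensor

variable [AddCommGroup V] [Module ℂ V] [AddCommGroup W] [Module ℂ W]

/-- Elementary tensor of operator-valued matrices. -/
def tkron {ι κ : Type} (P : Matrix ι ι V) (Q : Matrix κ κ W) :
    Matrix (ι × κ) (ι × κ) (V ⊗[ℂ] W) :=
  Matrix.of fun p q => P p.1 q.1 ⊗ₜ[ℂ] Q p.2 q.2

/-- The cone `D_n^{max}` : all `α (P ⊗ Q) α*`. -/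
def Dmax (posV : ∀ (ι : Type) [Fintype ι] [DecidableEq ι], Set (Matrix ι ι V))
    (posW : ∀ (ι : Type) [Fintype ι] [DecidableEq ι], Set (Matrix ι ι W))
    (ι : Type) [Fintype ι] [DecidableEq ι] : Set (Matrix ι ι (V ⊗[ℂ] W)) :=
  { Z | ∃ (k l : ℕ) (P : Matrix (Fin k) (Fin k) V) (Q : Matrix (Fin l) (Fin l) W)
      (α : Matrix ι (Fin k × Fin l) ℂ),
      P ∈ posV (Fin k) ∧ Q ∈ posW (Fin l) ∧ Z = mconj α (tkron P Q) }

/-- The positive cones of the maximal operator system tensor product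
(the Archimedeanization of `D^{max}`). -/
def maxPos (posV : ∀ (ι : Type) [Fintype ι] [DecidableEq ι], Set (Matrix ι ι V)) (uV : V)
    (posW : ∀ (ι : Type) [Fintype ι] [DecidableEq ι], Set (Matrix ι ι W)) (uW : W)
    (ι : Type) [Fintype ι] [DecidableEq ι] : Set (Matrix ι ι (V ⊗[ℂ] W)) :=
  { Z | ∀ ε : ℝ, 0 < ε →
      Z + (ε : ℂ) • Matrix.diagonal (fun _ => uV ⊗ₜ[ℂ] uW) ∈ Dmax posV posW ι }

/-- The ground level positive cone of the maximal tensor product. -/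
def maxPos1 (posV : ∀ (ι : Type) [Fintype ι] [DecidableEq ι], Set (Matrix ι ι V)) (uV : V)
    (posW : ∀ (ι : Type) [Fintype ι] [DecidableEq ι], Set (Matrix ι ι W)) (uW : W) :
    Set (V ⊗[ℂ] W) :=
  { z | Matrix.of (fun _ _ : Fin 1 => z) ∈ maxPos posV uV posW uW (Fin 1) }

end Tensor

/-- Positivity in matrix algebras over a (C*-)algebra: elements of the form `Y* Y`. -/
def cstarPos {A : Type} [Ring A] [StarRing A] (ι : Type) [Fintype ι] :
    Set (Matrix ι ι A) :=
  { X | ∃ Y : Matrix ι ι A, X = Yᴴ * Y }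

/-- The dual space of an operator system. -/
abbrev DualV (V : Type) [AddCommGroup V] [Module ℂ V] := V →ₗ[ℂ] ℂ

/-- The double dual space. -/
abbrev BiDual (V : Type) [AddCommGroup V] [Module ℂ V] := DualV (DualV V)

section Dual

variable [AddCommGroup V] [Module ℂ V]

/-- Pairing of a matrix of functionals with an operator-valued matrix. -/
def ampMat {ι κ m : Type} (f : Matrix ι κ (DualV V)) (X : Matrix m m V) :
    Matrix (m × ι) (m × κ) ℂ :=
  Matrix.of fun p q => f p.2 q.2 (X p.1 q.1)

/-- The matrix ordering on the dual space: `Mₙ(S*)⁺ = CP(S, Mₙ)`. -/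
def dualPos (posV : ∀ (ι : Type) [Fintype ι] [DecidableEq ι], Set (Matrix ι ι V))
    (ι : Type) [Fintype ι] [DecidableEq ι] : Set (Matrix ι ι (DualV V)) :=
  { f | ∀ (m : Type) [Fintype m] [DecidableEq m], ∀ X ∈ posV m, (ampMat f X).PosSemidef }

/-- The matrix ordering on the double dual. -/
def bidualPos (posV : ∀ (ι : Type) [Fintype ι] [DecidableEq ι], Set (Matrix ι ι V))
    (ι : Type) [Fintype ι] [DecidableEq ι] : Set (Matrix ι ι (BiDual V)) :=
  { F | ∀ (κ : Type) [Fintype κ] [DecidableEq κ], ∀ f ∈ dualPos posV κ,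
      (Matrix.of fun (p q : ι × κ) => F p.1 q.1 (f p.2 q.2)).PosSemidef }

end Dual

/-- `‖M‖ ≤ r` for scalar matrices, via positivity of a `2×2` block matrix. -/
def cNormLE {ι κ : Type} [Fintype ι] [DecidableEq ι] [Fintype κ] [DecidableEq κ]
    (M : Matrix ι κ ℂ) (r : ℝ) : Prop :=
  (Matrix.fromBlocks ((r : ℂ) • 1) M Mᴴ ((r : ℂ) • 1)).PosSemidef

section DualNorm

/-- The matrix norm data of an operator system, in partially applicable form. -/
def OpSys.normData [AddCommGroup V] [Module ℂ V] [StarAddMonoid V] [StarModule ℂ V]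
    (𝒮 : OpSys V) (ι κ : Type) [Fintype ι] [DecidableEq ι] [Fintype κ] [DecidableEq κ] :
    Matrix ι κ V → ℝ → Prop :=
  fun X r => 𝒮.normLE X r

/-- The matrix cones of matrices over a C*-algebra, in partially applicable form. -/
def cstarPosData (A : Type) [Ring A] [StarRing A]
    (ι : Type) [Fintype ι] [DecidableEq ι] : Set (Matrix ι ι A) :=
  cstarPos ι

/-- The completely bounded norm (as a predicate `‖f‖_cb ≤ r`) on matrices over the
dual of a space with matrix norm data `normV`; this is the operator space dual
matrix norm. -/
def dualNormLE [AddCommGroup V] [Module ℂ V]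
    (normV : ∀ (ι κ : Type) [Fintype ι] [DecidableEq ι] [Fintype κ] [DecidableEq κ],
      Matrix ι κ V → ℝ → Prop)
    (ι κ : Type) [Fintype ι] [DecidableEq ι] [Fintype κ] [DecidableEq κ]
    (f : Matrix ι κ (DualV V)) (r : ℝ) : Prop :=
  ∀ (m : Type) [Fintype m] [DecidableEq m], ∀ X : Matrix m m V,
    normV m m X 1 → cNormLE (ampMat f X) r

end DualNorm

section Werner

variable {U : Type} [AddCommGroup U] [Module ℂ U]

/-- Werner's unitization cone on `U ⊕ ℂ` for a matrix ordered operator space `U`,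
given by the matrix cones `posU` and matrix norms `normU` of `U` :
`X + A ∈ Mₙ(Ũ)⁺` iff `A ∈ Mₙ⁺` and
`φ((A+εIₙ)^{-1/2} X (A+εIₙ)^{-1/2}) ≥ -1` for every `ε > 0` and every positive
contractive functional `φ` on `Mₙ(U)`. -/
def wernerPos (posU : ∀ (ι : Type) [Fintype ι] [DecidableEq ι], Set (Matrix ι ι U))
    (normU : ∀ (ι κ : Type) [Fintype ι] [DecidableEq ι] [Fintype κ] [DecidableEq κ],
      Matrix ι κ U → ℝ → Prop)
    (ι : Type) [Fintype ι] [DecidableEq ι] : Set (Matrix ι ι (U × ℂ)) :=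
  { X | (Matrix.of fun i j => (X i j).2).PosSemidef ∧
      ∀ ε : ℝ, 0 < ε → ∀ B : Matrix ι ι ℂ, B.PosDef →
        B * B = Matrix.of (fun i j => (X i j).2) + (ε : ℂ) • 1 →
        ∀ φ : Matrix ι ι U →ₗ[ℂ] ℂ,
          (∀ g ∈ posU ι, 0 ≤ (φ g).re ∧ (φ g).im = 0) →
          (∀ (g : Matrix ι ι U) (r : ℝ), 0 ≤ r → normU ι ι g r → ‖φ g‖ ≤ r) →
          -1 ≤ (φ (mconj B⁻¹ (Matrix.of fun i j => (X i j).1))).re }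

end Werner

section MatrixMaps

variable [AddCommGroup V] [Module ℂ V] [AddCommGroup W] [Module ℂ W]

/-- Amplification of a matrix-algebra valued map evaluated on an operator matrix. -/
def blkMat {p : Type} (φ : V →ₗ[ℂ] Matrix p p ℂ) {ι : Type} (X : Matrix ι ι V) :
    Matrix (ι × p) (ι × p) ℂ :=
  Matrix.of fun q r => φ (X q.1 r.1) q.2 r.2

/-- Unital completely positive map into a matrix algebra, for raw matrix-cone data. -/
def UCPtoM {R : Type} [AddCommGroup R] [Module ℂ R]
    (posR : ∀ (ι : Type) [Fintype ι] [DecidableEq ι], Set (Matrix ι ι R)) (uR : R)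
    {p : Type} [Fintype p] [DecidableEq p] (φ : R →ₗ[ℂ] Matrix p p ℂ) : Prop :=
  φ uR = 1 ∧ ∀ (ι : Type) [Fintype ι] [DecidableEq ι], ∀ X ∈ posR ι, (blkMat φ X).PosSemidef

/-- Completely positive map from a matrix algebra into matrix-cone data. -/
def CPfromM {p : Type} [Fintype p] [DecidableEq p]
    (posW : ∀ (ι : Type) [Fintype ι] [DecidableEq ι], Set (Matrix ι ι W))
    (ψ : Matrix p p ℂ →ₗ[ℂ] W) : Prop :=
  ∀ (ι : Type) [Fintype ι] [DecidableEq ι] (B : Matrix ι ι (Matrix p p ℂ)),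
    (Matrix.of fun (q r : ι × p) => B q.1 r.1 q.2 r.2).PosSemidef →
    (Matrix.of fun i j => ψ (B i j)) ∈ posW ι

/-- The pairing `φ ⊗ ψ : V ⊗ W → M_{p×q}` associated with matrix-algebra valued maps. -/
def kronPair {p q : Type} [Fintype p] [DecidableEq p] [Fintype q] [DecidableEq q]
    (φ : V →ₗ[ℂ] Matrix p p ℂ) (ψ : W →ₗ[ℂ] Matrix q q ℂ) :
    V ⊗[ℂ] W →ₗ[ℂ] Matrix (p × q) (p × q) ℂ :=
  TensorProduct.lift
    (LinearMap.mk₂ ℂ (fun v w => φ v ⊗ₖ ψ w)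
      (fun v v' w => by simp [map_add, Matrix.add_kronecker])
      (fun c v w => by simp [map_smul, Matrix.smul_kronecker])
      (fun v w w' => by simp [map_add, Matrix.kronecker_add])
      (fun c v w => by simp [map_smul, Matrix.kronecker_smul]))

/-- The ground level positive cone of the minimal operator system tensor product. -/
def minPos1 (posV : ∀ (ι : Type) [Fintype ι] [DecidableEq ι], Set (Matrix ι ι V)) (uV : V)
    (posW : ∀ (ι : Type) [Fintype ι] [DecidableEq ι], Set (Matrix ι ι W)) (uW : W) :
    Set (V ⊗[ℂ] W) :=
  { z | ∀ (k m : ℕ) (φ : V →ₗ[ℂ] Matrix (Fin k) (Fin k) ℂ)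
      (ψ : W →ₗ[ℂ] Matrix (Fin m) (Fin m) ℂ),
      UCPtoM posV uV φ → UCPtoM posW uW ψ → (kronPair φ ψ z).PosSemidef }

/-- The matrix level positive cones of the minimal operator system tensor product. -/
def minPosMat (posV : ∀ (ι : Type) [Fintype ι] [DecidableEq ι], Set (Matrix ι ι V)) (uV : V)
    (posW : ∀ (ι : Type) [Fintype ι] [DecidableEq ι], Set (Matrix ι ι W)) (uW : W)
    (ι : Type) [Fintype ι] [DecidableEq ι] : Set (Matrix ι ι (V ⊗[ℂ] W)) :=
  { Z | ∀ (k m : ℕ) (φ : V →ₗ[ℂ] Matrix (Fin k) (Fin k) ℂ)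
      (ψ : W →ₗ[ℂ] Matrix (Fin m) (Fin m) ℂ),
      UCPtoM posV uV φ → UCPtoM posW uW ψ →
      (Matrix.of fun (q r : ι × (Fin k × Fin m)) =>
        kronPair φ ψ (Z q.1 r.1) q.2 r.2).PosSemidef }

/-- The entry functionals of a matrix-algebra valued map. -/
def entryF {p : Type} (f : V →ₗ[ℂ] Matrix p p ℂ) (i j : p) : DualV V where
  toFun x := f x i j
  map_add' x y := by simp [map_add, Matrix.add_apply]
  map_smul' c x := by simp [map_smul, Matrix.smul_apply]

/-- Conjugation of a matrix-algebra valued map by a fixed scalar matrix. -/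
def conjMap {p : Type} [Fintype p] (B : Matrix p p ℂ) (f : V →ₗ[ℂ] Matrix p p ℂ) :
    V →ₗ[ℂ] Matrix p p ℂ where
  toFun x := B * f x * B
  map_add' x y := by simp [map_add, Matrix.mul_add, Matrix.add_mul]
  map_smul' c x := by simp [map_smul, Matrix.mul_smul, Matrix.smul_mul]

end MatrixMaps

/-- The weak expectation property, for raw matrix-cone data `(posV, uV)` on `V` :
the canonical inclusion into the bidual factors through some `B(H)`
(`H = ℓ²(Λ)`) by unital completely positive maps. -/
def HasWEP {V : Type} [AddCommGroup V] [Module ℂ V]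
    (posV : ∀ (ι : Type) [Fintype ι] [DecidableEq ι], Set (Matrix ι ι V)) (uV : V) : Prop :=
  ∃ (Λ : Type) (Φ : V →ₗ[ℂ] ((lp (fun _ : Λ => ℂ) 2) →L[ℂ] (lp (fun _ : Λ => ℂ) 2)))
    (Ψ : ((lp (fun _ : Λ => ℂ) 2) →L[ℂ] (lp (fun _ : Λ => ℂ) 2)) →ₗ[ℂ] BiDual V),
    Φ uV = 1 ∧
    (∀ (ι : Type) [Fintype ι] [DecidableEq ι], ∀ X ∈ posV ι, X.map Φ ∈ cstarPos ι) ∧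
    Ψ 1 = Module.Dual.eval ℂ V uV ∧
    (∀ (ι : Type) [Fintype ι] [DecidableEq ι],
      ∀ Y ∈ cstarPos (A := (lp (fun _ : Λ => ℂ) 2) →L[ℂ] (lp (fun _ : Λ => ℂ) 2)) ι,
        Y.map Ψ ∈ bidualPos posV ι) ∧
    (∀ x : V, Ψ (Φ x) = Module.Dual.eval ℂ V x)

end

/-!
Let `0 ≤ Q ≤ s`. Then `‖Q - s/2‖ ≤ s/2`, so for `c = s/2 + ε` the matrix `(Q - s/2)/c` lies in
the open unit ball of `Mₙ(T)` and lifts to some `X` with `‖X‖ < 1`. Since `Φ` preserves adjoints,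
`P = c Re X + s/2` lifts `Q`, and `‖X‖ ≤ 1` gives `Re X ≥ -1`, that is `P + ε ≥ 0`.
-/

section MatrixConj

variable {V : Type} [AddCommGroup V] [Module ℂ V]

lemma mconj_smul_one {ι : Type} [Fintype ι] [DecidableEq ι] (a : ℂ) (X : Matrix ι ι V) :
    mconj (a • (1 : Matrix ι ι ℂ)) X = (a * star a) • X := by
  ext i j
  simp [mconj, Matrix.one_apply, apply_ite (starRingEnd ℂ), ite_smul, Finset.sum_ite_eq]

lemma mconj_fromRows_one_smul_one {ι : Type} [Fintype ι] [DecidableEq ι] (a : ℂ)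
    (X : Matrix ι ι V) :
    mconj (Matrix.fromRows (1 : Matrix ι ι ℂ) (a • 1)) X =
      Matrix.fromBlocks X (star a • X) (a • X) ((a * star a) • X) := by
  ext (i | i) (j | j) <;>
    simp [mconj, Matrix.one_apply, apply_ite (starRingEnd ℂ), ite_smul, Finset.sum_ite_eq,
      mul_comm]

lemma mconj_fromCols_one_one {ι : Type} [Fintype ι] [DecidableEq ι]
    (A B C D : Matrix ι ι V) :
    mconj (Matrix.fromCols (1 : Matrix ι ι ℂ) 1) (Matrix.fromBlocks A B C D) =
      A + B + C + D := by
  ext i j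
  simp [mconj, Matrix.one_apply, ite_smul, Finset.sum_ite_eq, Fintype.sum_sum_type,
    Finset.sum_add_distrib]
  abel

end MatrixConj

section StarModule

variable {A B : Type*} [AddCommGroup A] [Module ℂ A] [StarAddMonoid A] [StarModule ℂ A]
  [AddCommGroup B] [Module ℂ B] [StarAddMonoid B] [StarModule ℂ B]

open ComplexStarModule in
lemma LinearMap.map_star_of_isSelfAdjoint (f : A →ₗ[ℂ] B)
    (hf : ∀ x, IsSelfAdjoint x → IsSelfAdjoint (f x)) (x : A) : f (star x) = star (f x) := by
  rw [← realPart_add_I_smul_imaginaryPart x]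
  simp [(ℜ x).2.star_eq, (ℑ x).2.star_eq, (hf _ (ℜ x).2).star_eq, (hf _ (ℑ x).2).star_eq]

end StarModule

section MatrixStar

variable {V : Type} [AddCommGroup V] [StarAddMonoid V] {ι κ : Type}

@[simp]
lemma mstar_apply (X : Matrix ι κ V) (i : κ) (j : ι) : mstar X i j = star (X j i) := rfl

lemma mstar_sub (X Y : Matrix ι κ V) : mstar (X - Y) = mstar X - mstar Y := by
  ext i j; simp

lemma mstar_smul [Module ℂ V] [StarModule ℂ V] (c : ℂ) (X : Matrix ι κ V) :
    mstar (c • X) = star c • mstar X := by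
  ext i j; simp [star_smul]

end MatrixStar

local notation "𝟙[" 𝒮 "]" => Matrix.diagonal (fun _ => OpSys.unit 𝒮)

namespace OpSys

variable {V : Type} [AddCommGroup V] [Module ℂ V] [StarAddMonoid V] [StarModule ℂ V]
  (𝒮 : OpSys V) {ι : Type} [Fintype ι] [DecidableEq ι]

lemma ofReal_smul_mem_pos {X : Matrix ι ι V} (hX : X ∈ 𝒮.pos ι) {s : ℝ} (hs : 0 ≤ s) :
    (s : ℂ) • X ∈ 𝒮.pos ι := by
  have h := 𝒮.pos_conj ι ι (((√s : ℝ) : ℂ) • 1) X hX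
  rwa [mconj_smul_one, Complex.star_def, Complex.conj_ofReal, ← Complex.ofReal_mul,
    Real.mul_self_sqrt hs] at h

lemma ofReal_smul_unit_mem_pos {s : ℝ} (hs : 0 ≤ s) : (s : ℂ) • 𝟙[𝒮] ∈ 𝒮.pos ι :=
  𝒮.ofReal_smul_mem_pos (𝒮.unit_pos ι) hs

variable {𝒮}

lemma mstar_eq_of_add_mem_pos_of_sub_mem_pos {Z : Matrix ι ι V} {r : ℝ}
    (hadd : (r : ℂ) • 𝟙[𝒮] + Z ∈ 𝒮.pos ι) (hsub : (r : ℂ) • 𝟙[𝒮] - Z ∈ 𝒮.pos ι) :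
    mstar Z = Z := by
  have hZ : Z = (2⁻¹ : ℂ) • (((r : ℂ) • 𝟙[𝒮] + Z) - ((r : ℂ) • 𝟙[𝒮] - Z)) := by module
  conv_lhs => rw [hZ, mstar_smul, mstar_sub, 𝒮.pos_star _ _ hadd, 𝒮.pos_star _ _ hsub]
  simp only [star_inv₀, star_ofNat]
  module

lemma normLE_of_add_mem_pos_of_sub_mem_pos {Z : Matrix ι ι V} {r : ℝ}
    (hadd : (r : ℂ) • 𝟙[𝒮] + Z ∈ 𝒮.pos ι) (hsub : (r : ℂ) • 𝟙[𝒮] - Z ∈ 𝒮.pos ι) :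
    𝒮.normLE Z r := by
  -- conjugating `r ± Z` by `[1; ±1]` gives `[[r ± Z, ±(r ± Z)], [±(r ± Z), r ± Z]]`,
  -- and the average of the two is `[[r, Z], [Z, r]]`
  have hA := 𝒮.pos_conj ι (ι ⊕ ι) (Matrix.fromRows 1 ((1 : ℂ) • 1)) _ hadd
  have hB := 𝒮.pos_conj ι (ι ⊕ ι) (Matrix.fromRows 1 ((-1 : ℂ) • 1)) _ hsub
  rw [mconj_fromRows_one_smul_one] at hA hB
  have h := 𝒮.ofReal_smul_mem_pos (𝒮.pos_add _ _ _ hA hB) (by norm_num : (0 : ℝ) ≤ 1 / 2)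
  rw [normLE, mstar_eq_of_add_mem_pos_of_sub_mem_pos hadd hsub]
  convert h using 1
  rw [Matrix.fromBlocks_add, Matrix.fromBlocks_smul]
  congr 1 <;> simp <;> module

lemma add_mstar_mem_pos_of_normLE {X : Matrix ι ι V} {r : ℝ} (h : 𝒮.normLE X r) :
    ((2 * r : ℝ) : ℂ) • 𝟙[𝒮] + (X + mstar X) ∈ 𝒮.pos ι := by
  have h := 𝒮.pos_conj (ι ⊕ ι) ι (Matrix.fromCols 1 1) _ h
  rw [mconj_fromCols_one_one] at h
  convert h using 1
  push_cast
  module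

lemma normLE_ofReal_smul {κ : Type} [Fintype κ] [DecidableEq κ] {X : Matrix ι κ V} {r : ℝ}
    (h : 𝒮.normLE X r) {t : ℝ} (ht : 0 ≤ t) : 𝒮.normLE ((t : ℂ) • X) (t * r) := by
  rw [normLE, mstar_smul, Complex.star_def, Complex.conj_ofReal]
  convert 𝒮.ofReal_smul_mem_pos h ht using 1
  rw [Matrix.fromBlocks_smul]
  push_cast
  simp only [smul_smul]

lemma normLE_sub_half_smul_unit {Q : Matrix ι ι V} {s : ℝ} (hQ : Q ∈ 𝒮.pos ι)
    (hQs : (s : ℂ) • 𝟙[𝒮] - Q ∈ 𝒮.pos ι) :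
    𝒮.normLE (Q - ((s / 2 : ℝ) : ℂ) • 𝟙[𝒮]) (s / 2) := by
  apply normLE_of_add_mem_pos_of_sub_mem_pos
  · convert hQ using 1
    abel
  · convert hQs using 1
    match_scalars <;> ring

lemma add_mstar_add_two_smul_unit_mem_pos {X : Matrix ι ι V} {r : ℝ} (h : 𝒮.normLE X r)
    (hr : r ≤ 1) : X + mstar X + (2 : ℂ) • 𝟙[𝒮] ∈ 𝒮.pos ι := by
  convert 𝒮.pos_add _ _ _ (add_mstar_mem_pos_of_normLE h)
    (𝒮.ofReal_smul_unit_mem_pos (by linarith : (0 : ℝ) ≤ 2 - 2 * r)) using 1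
  match_scalars <;> ring

end OpSys

namespace IsUCPmap

variable {V W : Type} [AddCommGroup V] [Module ℂ V] [StarAddMonoid V] [StarModule ℂ V]
  [AddCommGroup W] [Module ℂ W] [StarAddMonoid W] [StarModule ℂ W]
  {𝒮 : OpSys V} {𝒯 : OpSys W} {Φ : V →ₗ[ℂ] W}

lemma isSelfAdjoint_map (hΦ : IsUCPmap 𝒮 𝒯 Φ) {x : V} (hx : IsSelfAdjoint x) :
    IsSelfAdjoint (Φ x) := by
  -- `r - x ≥ 0` for some `r`, so `r - Φ x` is positive, hence selfadjoint
  obtain ⟨r, -, hr⟩ := 𝒮.order_unit (Fin 1) (Matrix.of fun _ _ => x) (by ext; simp [hx.star_eq])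
  have h := congr_fun₂ (𝒯.pos_star _ _ (hΦ.2 _ _ hr)) 0 0
  show star (Φ x) = Φ x
  simpa [hΦ.1, 𝒯.unit_star] using h

lemma map_star (hΦ : IsUCPmap 𝒮 𝒯 Φ) (x : V) : Φ (star x) = star (Φ x) :=
  Φ.map_star_of_isSelfAdjoint (fun _ => hΦ.isSelfAdjoint_map) x

lemma map_mstar (hΦ : IsUCPmap 𝒮 𝒯 Φ) {ι κ : Type} (X : Matrix ι κ V) :
    (mstar X).map Φ = mstar (X.map Φ) := by
  ext i j; simp [hΦ.map_star]

end IsUCPmap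

/-- **Proposition 3.3.** Let `Φ : S → T` be a unital completely positive surjection
between operator systems.  If `Φ` is a complete quotient map of operator spaces
(each amplification maps the open unit ball of `Mₙ(S)` onto the open unit ball of
`Mₙ(T)`), then `Φ` is a complete order quotient map. -/
theorem complete_quotient_map_is_complete_order_quotient_map {V W : Type}
    [AddCommGroup V] [Module ℂ V] [StarAddMonoid V] [StarModule ℂ V]
    [AddCommGroup W] [Module ℂ W] [StarAddMonoid W] [StarModule ℂ W]
    (𝒮 : OpSys V) (𝒯 : OpSys W) (Φ : V →ₗ[ℂ] W)
    (hucp : IsUCPmap 𝒮 𝒯 Φ) (hsurj : Function.Surjective Φ)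
    (hq : ∀ (ι : Type) [Fintype ι] [DecidableEq ι] (Z : Matrix ι ι W),
      (∃ r : ℝ, 0 ≤ r ∧ r < 1 ∧ 𝒯.normLE Z r) ↔
        ∃ X : Matrix ι ι V, X.map Φ = Z ∧ ∃ r : ℝ, 0 ≤ r ∧ r < 1 ∧ 𝒮.normLE X r) :
    IsCOQuotientMap 𝒮 𝒯 Φ := by
  refine ⟨hucp, hsurj, fun ι _ _ Q hQ ε hε => ?_⟩
  obtain ⟨s, hs, hQs⟩ := 𝒯.order_unit ι Q (𝒯.pos_star ι Q hQ)
  set c : ℝ := s / 2 + ε with hc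
  have hc0 : (c : ℂ) ≠ 0 := Complex.ofReal_ne_zero.2 (by positivity)
  set Y : Matrix ι ι W := Q - ((s / 2 : ℝ) : ℂ) • 𝟙[𝒯]
  have hY : mstar Y = Y := by
    rw [mstar_sub, mstar_smul, 𝒯.pos_star _ _ hQ, 𝒯.pos_star _ _ (𝒯.unit_pos ι),
      Complex.star_def, Complex.conj_ofReal]
  obtain ⟨X, hXY, r, -, hr, hX⟩ := (hq ι (((c⁻¹ : ℝ) : ℂ) • Y)).1
    ⟨c⁻¹ * (s / 2), by positivity, by rw [inv_mul_lt_one₀ (by positivity)]; linarith,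
      OpSys.normLE_ofReal_smul (𝒯.normLE_sub_half_smul_unit hQ hQs) (by positivity)⟩
  refine ⟨((c / 2 : ℝ) : ℂ) • (X + mstar X) + ((s / 2 : ℝ) : ℂ) • 𝟙[𝒮], ?_, ?_⟩
  · convert 𝒮.ofReal_smul_mem_pos (𝒮.add_mstar_add_two_smul_unit_mem_pos hX hr.le)
      (by positivity : (0 : ℝ) ≤ c / 2) using 1
    match_scalars <;> push_cast [hc] <;> ring
  · rw [Matrix.map_add _ (map_add Φ), Matrix.map_smul _ _ (map_smul Φ _),
      Matrix.map_smul _ _ (map_smul Φ _), Matrix.map_add _ (map_add Φ), hucp.map_mstar, hXY,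
      mstar_smul, hY, Complex.star_def, Complex.conj_ofReal, Matrix.diagonal_map (map_zero Φ),
      hucp.1]
    match_scalars <;> field_simp <;> ring
end

section
/- Let S₁, S₂, T be operator systems and Φ : S₁ → S₂ a complete order quotient map. Then Φ ⊗ id_T : S₁ ⊗_max T → S₂ ⊗_max T is a complete order quotient map. (Projectivity of the maximal operator system tensor product.) -/
open scoped TensorProduct Kronecker ComplexOrder Matrix

/-! Write `F = Φ ⊗ id`. Positivity is preserved because `F` maps `α (P ⊗ Q) α*` to
`α (Φ(P) ⊗ Q) α*`. For the lifting property, write `Z + (ε/2) 1 = α (Q ⊗ R) α*`, lift `Q` to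
`P₁` with `P₁ + δ 1 ≥ 0`, and take `P = α (P₁ ⊗ R) α* - (ε/2) 1`. The defect
`δ α (1 ⊗ R) α*` is `1 ⊗ δ S` with `S = α (1 ⊗ R) α*` computed in `T`, and `S ≤ r 1` by the
order unit, so choosing `δ r = ε/2` makes `P + ε 1` a sum of elements of `D^max`. -/

open Matrix TensorProduct

section MatrixConj

variable {V W : Type} [AddCommGroup V] [Module ℂ V] [AddCommGroup W] [Module ℂ W]

lemma mconj_apply {m n : Type} [Fintype m] (α : Matrix n m ℂ) (X : Matrix m m V) (i j : n) :
    mconj α X i j = ∑ k, ∑ l, (α i k * star (α j l)) • X k l := rfl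

lemma mconj_add {m n : Type} [Fintype m] (α : Matrix n m ℂ) (X Y : Matrix m m V) :
    mconj α (X + Y) = mconj α X + mconj α Y := by
  ext i j
  simp [mconj_apply, smul_add, Finset.sum_add_distrib]

lemma mconj_smul {m n : Type} [Fintype m] (α : Matrix n m ℂ) (c : ℂ) (X : Matrix m m V) :
    mconj α (c • X) = c • mconj α X := by
  ext i j
  simp [mconj_apply, smul_comm c, Finset.smul_sum]

lemma smul_mconj {m n : Type} [Fintype m] (c : ℂ) (α : Matrix n m ℂ) (X : Matrix m m V) :
    mconj (c • α) X = (c * star c) • mconj α X := by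
  ext i j
  simp only [mconj_apply, Matrix.smul_apply, Finset.smul_sum, smul_smul, smul_eq_mul, star_mul']
  congr! 3
  ring

lemma map_mconj {m n : Type} [Fintype m] (α : Matrix n m ℂ) (X : Matrix m m V)
    (f : V →ₗ[ℂ] W) : (mconj α X).map f = mconj α (X.map f) := by
  ext i j
  simp [mconj_apply, map_sum, _root_.map_smul]

lemma mconj_submatrix {m m' n : Type} [Fintype m] [Fintype m'] (e : m' ≃ m)
    (α : Matrix n m ℂ) (X : Matrix m m V) :
    mconj (Matrix.of fun i a => α i (e a)) (X.submatrix e e) = mconj α X := by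
  ext i j
  rw [mconj_apply, mconj_apply, ← Equiv.sum_comp e]
  refine Finset.sum_congr rfl fun a _ => ?_
  rw [← Equiv.sum_comp e]
  rfl

lemma submatrix_eq_mconj {m n : Type} [Fintype m] [DecidableEq m] (e : n ≃ m)
    (X : Matrix m m V) :
    X.submatrix e e = mconj (Matrix.of fun (a : n) (j : m) => if j = e a then 1 else 0) X := by
  ext a b
  simp [mconj_apply, apply_ite (star : ℂ → ℂ), ite_smul, Finset.sum_ite_eq']

lemma tkron_add_left {ι κ : Type} (P P' : Matrix ι ι V) (Q : Matrix κ κ W) :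
    tkron (P + P') Q = tkron P Q + tkron P' Q := by
  ext p q
  simp [tkron, add_tmul]

lemma tkron_smul_left {ι κ : Type} (c : ℂ) (P : Matrix ι ι V) (Q : Matrix κ κ W) :
    tkron (c • P) Q = c • tkron P Q := by
  ext p q
  simp [tkron, smul_tmul']

lemma map_tkron {V' W' : Type} [AddCommGroup V'] [Module ℂ V'] [AddCommGroup W'] [Module ℂ W']
    {ι κ : Type} (P : Matrix ι ι V) (Q : Matrix κ κ W) (f : V →ₗ[ℂ] V') (g : W →ₗ[ℂ] W') :
    (tkron P Q).map (TensorProduct.map f g) = tkron (P.map f) (Q.map g) := by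
  ext p q
  simp [tkron]

def oneKron (κ : Type) [DecidableEq κ] {o : Type} (R : Matrix o o W) :
    Matrix (κ × o) (κ × o) W :=
  Matrix.of fun c d => if c.1 = d.1 then R c.2 d.2 else 0

lemma tkron_diagonal_left {κ o : Type} [DecidableEq κ] (u : V) (R : Matrix o o W) :
    tkron (Matrix.diagonal fun _ : κ => u) R = (oneKron κ R).map (TensorProduct.mk ℂ V W u) := by
  ext c d
  by_cases h : c.1 = d.1 <;> simp [tkron, oneKron, Matrix.diagonal_apply, h]

end MatrixConj

section MatrixStar

variable {V : Type} [AddCommGroup V] [StarAddMonoid V]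

lemma mstar_oneKron {κ o : Type} [DecidableEq κ] {R : Matrix o o V} (hR : mstar R = R) :
    mstar (oneKron κ R) = oneKron κ R := by
  ext c d
  by_cases h : c.1 = d.1
  · simpa [mstar, oneKron, h] using congrFun (congrFun hR c.2) d.2
  · simp [mstar, oneKron, h, Ne.symm h]

variable [Module ℂ V] [StarModule ℂ V]

lemma mstar_mconj {m n : Type} [Fintype m] (α : Matrix n m ℂ) (X : Matrix m m V) :
    mstar (mconj α X) = mconj α (mstar X) := by
  ext i j
  simp only [mstar, mconj_apply, Matrix.of_apply, star_sum, star_smul, star_mul', star_star]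
  rw [Finset.sum_comm]
  simp only [mul_comm]

end MatrixStar

namespace OpSys

variable {V : Type} [AddCommGroup V] [Module ℂ V] [StarAddMonoid V] [StarModule ℂ V]
  (𝒮 : OpSys V)

lemma submatrix_mem_pos {m n : Type} [Fintype m] [DecidableEq m] [Fintype n] [DecidableEq n]
    (e : n ≃ m) {X : Matrix m m V} (hX : X ∈ 𝒮.pos m) : X.submatrix e e ∈ 𝒮.pos n := by
  rw [submatrix_eq_mconj]
  exact 𝒮.pos_conj _ _ _ _ hX

lemma fromBlocks_mem_pos {m n : Type} [Fintype m] [DecidableEq m] [Fintype n] [DecidableEq n]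
    {P : Matrix m m V} (hP : P ∈ 𝒮.pos m) {P' : Matrix n n V} (hP' : P' ∈ 𝒮.pos n) :
    Matrix.fromBlocks P 0 0 P' ∈ 𝒮.pos (m ⊕ n) := by
  have hinl : Matrix.fromBlocks P 0 0 0
      = mconj (Matrix.of fun (s : m ⊕ n) (a : m) => if s = Sum.inl a then 1 else 0) P := by
    ext s t
    cases s <;> cases t <;>
      simp [mconj_apply, apply_ite (star : ℂ → ℂ), ite_smul]
  have hinr : Matrix.fromBlocks 0 0 0 P'
      = mconj (Matrix.of fun (s : m ⊕ n) (a : n) => if s = Sum.inr a then 1 else 0) P' := by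
    ext s t
    cases s <;> cases t <;>
      simp [mconj_apply, apply_ite (star : ℂ → ℂ), ite_smul]
  have hsplit : Matrix.fromBlocks P 0 0 P' = Matrix.fromBlocks P 0 0 0 + Matrix.fromBlocks 0 0 0 P' := by
    simp [Matrix.fromBlocks_add]
  rw [hsplit, hinl, hinr]
  exact 𝒮.pos_add _ _ _ (𝒮.pos_conj _ _ _ _ hP) (𝒮.pos_conj _ _ _ _ hP')

lemma of_unit_mem_pos : (Matrix.of fun _ _ : Fin 1 => 𝒮.unit) ∈ 𝒮.pos (Fin 1) := by
  convert 𝒮.unit_pos (Fin 1) using 1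
  ext i j
  simp [Subsingleton.elim i j]

end OpSys

section Dmax

variable {V W : Type} [AddCommGroup V] [Module ℂ V] [StarAddMonoid V] [StarModule ℂ V]
  [AddCommGroup W] [Module ℂ W] [StarAddMonoid W] [StarModule ℂ W] (𝒮 : OpSys V) (𝒯 : OpSys W)
  {ι : Type} [Fintype ι] [DecidableEq ι]

lemma mconj_tkron_mem_Dmax {m n : Type} [Fintype m] [DecidableEq m] [Fintype n] [DecidableEq n]
    {P : Matrix m m V} (hP : P ∈ 𝒮.pos m) {Q : Matrix n n W} (hQ : Q ∈ 𝒯.pos n)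
    (α : Matrix ι (m × n) ℂ) : mconj α (tkron P Q) ∈ Dmax 𝒮.pos 𝒯.pos ι := by
  let e : Fin (Fintype.card m) ≃ m := (Fintype.equivFin m).symm
  let f : Fin (Fintype.card n) ≃ n := (Fintype.equivFin n).symm
  refine ⟨_, _, P.submatrix e e, Q.submatrix f f, Matrix.of fun i c => α i (e c.1, f c.2),
    𝒮.submatrix_mem_pos e hP, 𝒯.submatrix_mem_pos f hQ, ?_⟩
  exact (mconj_submatrix (e.prodCongr f) α (tkron P Q)).symm

variable {𝒮 𝒯} in
lemma add_mem_Dmax {Z₁ Z₂ : Matrix ι ι (V ⊗[ℂ] W)} (h₁ : Z₁ ∈ Dmax 𝒮.pos 𝒯.pos ι)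
    (h₂ : Z₂ ∈ Dmax 𝒮.pos 𝒯.pos ι) : Z₁ + Z₂ ∈ Dmax 𝒮.pos 𝒯.pos ι := by
  obtain ⟨k, l, P, Q, α, hP, hQ, rfl⟩ := h₁
  obtain ⟨k', l', P', Q', β, hP', hQ', rfl⟩ := h₂
  -- `α (P ⊗ Q) α* + β (P' ⊗ Q') β* = γ ((P ⊕ P') ⊗ (Q ⊕ Q')) γ*`, `γ` killing the cross terms
  let γ : Matrix ι ((Fin k ⊕ Fin k') × (Fin l ⊕ Fin l')) ℂ := Matrix.of fun i c =>
    Sum.elim (fun a => Sum.elim (fun b => α i (a, b)) (fun _ => 0) c.2)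
      (fun a => Sum.elim (fun _ => 0) (fun b => β i (a, b)) c.2) c.1
  have hγ : mconj α (tkron P Q) + mconj β (tkron P' Q')
      = mconj γ (tkron (Matrix.fromBlocks P 0 0 P') (Matrix.fromBlocks Q 0 0 Q')) := by
    ext i j
    simp [γ, mconj_apply, tkron, Matrix.fromBlocks, Fintype.sum_prod_type, Fintype.sum_sum_type]
  rw [hγ]
  exact mconj_tkron_mem_Dmax 𝒮 𝒯 (𝒮.fromBlocks_mem_pos hP hP') (𝒯.fromBlocks_mem_pos hQ hQ') γ

variable {𝒮 𝒯} in
lemma smul_mem_Dmax {δ : ℝ} (hδ : 0 ≤ δ) {Z : Matrix ι ι (V ⊗[ℂ] W)}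
    (hZ : Z ∈ Dmax 𝒮.pos 𝒯.pos ι) : (δ : ℂ) • Z ∈ Dmax 𝒮.pos 𝒯.pos ι := by
  obtain ⟨k, l, P, Q, α, hP, hQ, rfl⟩ := hZ
  refine ⟨k, l, P, Q, (Real.sqrt δ : ℂ) • α, hP, hQ, ?_⟩
  rw [smul_mconj, Complex.star_def, Complex.conj_ofReal, ← Complex.ofReal_mul,
    Real.mul_self_sqrt hδ]

variable {𝒯} in
lemma unit_tmul_mem_Dmax {Q : Matrix ι ι W} (hQ : Q ∈ 𝒯.pos ι) :
    Q.map (TensorProduct.mk ℂ V W 𝒮.unit) ∈ Dmax 𝒮.pos 𝒯.pos ι := by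
  convert mconj_tkron_mem_Dmax 𝒮 𝒯 𝒮.of_unit_mem_pos hQ
    (Matrix.of fun i (c : Fin 1 × ι) => if c.2 = i then 1 else 0) using 1
  ext i j
  simp [mconj_apply, tkron, Fintype.sum_prod_type, apply_ite (star : ℂ → ℂ), ite_smul,
    Finset.sum_ite_eq']

lemma smul_diagonal_unit_mem_Dmax {ε : ℝ} (hε : 0 ≤ ε) :
    (ε : ℂ) • Matrix.diagonal (fun _ : ι => 𝒮.unit ⊗ₜ[ℂ] 𝒯.unit) ∈ Dmax 𝒮.pos 𝒯.pos ι := by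
  refine smul_mem_Dmax hε ?_
  convert unit_tmul_mem_Dmax 𝒮 (𝒯.unit_pos ι) using 1
  simp [Matrix.diagonal_map]

lemma mconj_tkron_add_smul_mem_Dmax {k l : Type} [Fintype k] [DecidableEq k] [Fintype l]
    [DecidableEq l] {P : Matrix k k V} {δ : ℝ} (hδ : 0 ≤ δ)
    (hP : P + (δ : ℂ) • Matrix.diagonal (fun _ => 𝒮.unit) ∈ 𝒮.pos k)
    {R : Matrix l l W} (hR : R ∈ 𝒯.pos l) (α : Matrix ι (k × l) ℂ) {r : ℝ}
    (hr : (r : ℂ) • Matrix.diagonal (fun _ => 𝒯.unit) - mconj α (oneKron k R) ∈ 𝒯.pos ι) :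
    mconj α (tkron P R) + ((δ * r : ℝ) : ℂ) • Matrix.diagonal (fun _ => 𝒮.unit ⊗ₜ[ℂ] 𝒯.unit)
      ∈ Dmax 𝒮.pos 𝒯.pos ι := by
  have hsum := add_mem_Dmax (mconj_tkron_mem_Dmax 𝒮 𝒯 hP hR α)
    (smul_mem_Dmax hδ (unit_tmul_mem_Dmax 𝒮 hr))
  convert hsum using 1
  let u := (TensorProduct.mk ℂ V W 𝒮.unit).mapMatrix (m := ι) (n := ι)
  have hu : ∀ X, u X = X.map (TensorProduct.mk ℂ V W 𝒮.unit) := fun _ => rfl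
  have hdiag : u (Matrix.diagonal fun _ => 𝒯.unit) = Matrix.diagonal fun _ => 𝒮.unit ⊗ₜ 𝒯.unit := by
    simp [hu, Matrix.diagonal_map]
  rw [← hu, map_sub, map_smul, hdiag, tkron_add_left, tkron_smul_left, mconj_add, mconj_smul,
    tkron_diagonal_left, ← map_mconj, ← hu]
  push_cast
  module

end Dmax

section TensorMap

variable {V₁ V₂ W : Type}
  [AddCommGroup V₁] [Module ℂ V₁] [StarAddMonoid V₁] [StarModule ℂ V₁]
  [AddCommGroup V₂] [Module ℂ V₂] [StarAddMonoid V₂] [StarModule ℂ V₂]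
  [AddCommGroup W] [Module ℂ W] [StarAddMonoid W] [StarModule ℂ W]
  {𝒮₁ : OpSys V₁} {𝒮₂ : OpSys V₂} {𝒯 : OpSys W} {Φ : V₁ →ₗ[ℂ] V₂}
  {ι : Type} [DecidableEq ι]

lemma map_add_smul_diagonal_unit (hu : Φ 𝒮₁.unit = 𝒮₂.unit) (Z : Matrix ι ι (V₁ ⊗[ℂ] W))
    (c : ℂ) :
    (Z + c • Matrix.diagonal fun _ => 𝒮₁.unit ⊗ₜ[ℂ] 𝒯.unit).map (TensorProduct.map Φ LinearMap.id)
      = Z.map (TensorProduct.map Φ LinearMap.id) + c • Matrix.diagonal fun _ => 𝒮₂.unit ⊗ₜ 𝒯.unit := by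
  rw [← LinearMap.mapMatrix_apply, map_add, map_smul]
  simp [Matrix.diagonal_map, hu]

variable [Fintype ι]

lemma map_mem_Dmax (hΦ : IsCPmap 𝒮₁ 𝒮₂ Φ) {Z : Matrix ι ι (V₁ ⊗[ℂ] W)}
    (hZ : Z ∈ Dmax 𝒮₁.pos 𝒯.pos ι) :
    Z.map (TensorProduct.map Φ LinearMap.id) ∈ Dmax 𝒮₂.pos 𝒯.pos ι := by
  obtain ⟨k, l, P, Q, α, hP, hQ, rfl⟩ := hZ
  refine ⟨k, l, P.map Φ, Q, α, hΦ _ _ hP, hQ, ?_⟩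
  rw [map_mconj, map_tkron, LinearMap.id_coe, Matrix.map_id]

lemma map_mem_maxPos (hΦ : IsUCPmap 𝒮₁ 𝒮₂ Φ) {Z : Matrix ι ι (V₁ ⊗[ℂ] W)}
    (hZ : Z ∈ maxPos 𝒮₁.pos 𝒮₁.unit 𝒯.pos 𝒯.unit ι) :
    Z.map (TensorProduct.map Φ LinearMap.id) ∈ maxPos 𝒮₂.pos 𝒮₂.unit 𝒯.pos 𝒯.unit ι := by
  intro ε hε
  rw [← map_add_smul_diagonal_unit hΦ.1]
  exact map_mem_Dmax hΦ.2 (hZ ε hε)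

lemma exists_lift_mem_maxPos (hΦ : IsCOQuotientMap 𝒮₁ 𝒮₂ Φ) {Z : Matrix ι ι (V₂ ⊗[ℂ] W)}
    (hZ : Z ∈ maxPos 𝒮₂.pos 𝒮₂.unit 𝒯.pos 𝒯.unit ι) {ε : ℝ} (hε : 0 < ε) :
    ∃ P : Matrix ι ι (V₁ ⊗[ℂ] W),
      P + (ε : ℂ) • Matrix.diagonal (fun _ => 𝒮₁.unit ⊗ₜ[ℂ] 𝒯.unit) ∈
        maxPos 𝒮₁.pos 𝒮₁.unit 𝒯.pos 𝒯.unit ι ∧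
      P.map (TensorProduct.map Φ LinearMap.id) = Z := by
  obtain ⟨k, l, Q, R, α, hQ, hR, hZα⟩ := hZ (ε / 2) (half_pos hε)
  obtain ⟨r, hr, hrR⟩ := 𝒯.order_unit ι (mconj α (oneKron (Fin k) R))
    (by rw [mstar_mconj, mstar_oneKron (𝒯.pos_star _ R hR)])
  obtain ⟨P₁, hP₁, rfl⟩ := hΦ.2.2 (Fin k) Q hQ (ε / (2 * r)) (by positivity)
  have hdom := mconj_tkron_add_smul_mem_Dmax 𝒮₁ 𝒯 (by positivity) hP₁ hR α hrR
  rw [show ε / (2 * r) * r = ε / 2 by field_simp] at hdom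
  refine ⟨mconj α (tkron P₁ R) - ((ε / 2 : ℝ) : ℂ) • Matrix.diagonal fun _ => 𝒮₁.unit ⊗ₜ 𝒯.unit,
    fun ε' hε' => ?_, ?_⟩
  · convert add_mem_Dmax hdom (smul_diagonal_unit_mem_Dmax 𝒮₁ 𝒯 hε'.le) using 1
    push_cast
    module
  · rw [sub_eq_add_neg, ← neg_smul, map_add_smul_diagonal_unit hΦ.1.1, map_mconj, map_tkron,
      LinearMap.id_coe, Matrix.map_id, ← hZα]
    simp

end TensorMap

/-- **Theorem 3.4 (projectivity of the maximal tensor product).**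
If `Φ : S₁ → S₂` is a complete order quotient map, then
`Φ ⊗ id_T : S₁ ⊗_max T → S₂ ⊗_max T` is a complete order quotient map. -/
theorem maxTensor_projective {V₁ V₂ W : Type}
    [AddCommGroup V₁] [Module ℂ V₁] [StarAddMonoid V₁] [StarModule ℂ V₁]
    [AddCommGroup V₂] [Module ℂ V₂] [StarAddMonoid V₂] [StarModule ℂ V₂]
    [AddCommGroup W] [Module ℂ W] [StarAddMonoid W] [StarModule ℂ W]
    (𝒮₁ : OpSys V₁) (𝒮₂ : OpSys V₂) (𝒯 : OpSys W)
    (Φ : V₁ →ₗ[ℂ] V₂) (hΦ : IsCOQuotientMap 𝒮₁ 𝒮₂ Φ) :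
    (TensorProduct.map Φ (LinearMap.id (R := ℂ) (M := W)))
        (𝒮₁.unit ⊗ₜ[ℂ] 𝒯.unit) = 𝒮₂.unit ⊗ₜ[ℂ] 𝒯.unit ∧
    Function.Surjective (TensorProduct.map Φ (LinearMap.id (R := ℂ) (M := W))) ∧
    (∀ (ι : Type) [Fintype ι] [DecidableEq ι],
      ∀ Z ∈ maxPos 𝒮₁.pos 𝒮₁.unit 𝒯.pos 𝒯.unit ι,
        Z.map (TensorProduct.map Φ (LinearMap.id (R := ℂ) (M := W))) ∈
          maxPos 𝒮₂.pos 𝒮₂.unit 𝒯.pos 𝒯.unit ι) ∧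
    (∀ (ι : Type) [Fintype ι] [DecidableEq ι],
      ∀ Z ∈ maxPos 𝒮₂.pos 𝒮₂.unit 𝒯.pos 𝒯.unit ι, ∀ ε : ℝ, 0 < ε →
        ∃ P : Matrix ι ι (V₁ ⊗[ℂ] W),
          P + (ε : ℂ) • Matrix.diagonal (fun _ => 𝒮₁.unit ⊗ₜ[ℂ] 𝒯.unit) ∈
            maxPos 𝒮₁.pos 𝒮₁.unit 𝒯.pos 𝒯.unit ι ∧
          P.map (TensorProduct.map Φ (LinearMap.id (R := ℂ) (M := W))) = Z) := by
  refine ⟨by simp [hΦ.1.1], TensorProduct.map_surjective hΦ.2.1 Function.surjective_id, ?_, ?_⟩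
  · exact fun ι _ _ Z hZ => map_mem_maxPos hΦ.1 hZ
  · exact fun ι _ _ Z hZ ε hε => exists_lift_mem_maxPos hΦ hZ hε
end
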